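/- Let A ∈ ℝ^{n×n} with A − I an M-matrix and b ∈ ℝ^n, and let x^{k} be the generalized Newton iterates x^{k+1} = (A − D(x^k))⁻¹ b. For k ≥ 1, define s_k = ∑ᵢ sign(x^k)ᵢ ∈ ℤ. Then s_{k+1} ≥ s_k for all k ≥ 1, and if D(x^{k+1}) ≠ D(x^k) then s_{k+1} ≥ s_k + 1; moreover −n ≤ s_k ≤ n for all k. -/

import Mathlib

open Matrix

def IsZMatrix {n : ℕ} (A : Matrix (Fin n) (Fin n) ℝ) : Prop :=
  ∀ i j, i ≠ j → A i j ≤ 0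

/-- An M-matrix: a Z-matrix that is invertible with entrywise nonnegative inverse. -/
def IsMMatrix {n : ℕ} (A : Matrix (Fin n) (Fin n) ℝ) : Prop :=
  IsZMatrix A ∧ IsUnit A ∧ ∀ i j, 0 ≤ A⁻¹ i j

/-- D(x) = diag(sign(x)). -/
noncomputable def signD {n : ℕ} (x : Fin n → ℝ) : Matrix (Fin n) (Fin n) ℝ :=
  Matrix.diagonal (fun i => Real.sign (x i))

/-- Componentwise absolute value. -/
def absVec {n : ℕ} (x : Fin n → ℝ) : Fin n → ℝ := fun i => |x i|

/-- Spectral (operator 2-) norm of a matrix. -/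
noncomputable def specNorm {n : ℕ} (A : Matrix (Fin n) (Fin n) ℝ) : ℝ :=
  ‖Matrix.toEuclideanCLM (𝕜 := ℝ) A‖

/-!
For every `w`, `A - D(w) = (A - I) + diag(1 - sign w)` is again an M-matrix, so
`(A - D(w)) y ≥ 0` forces `y ≥ 0`. Subtracting consecutive Newton equations gives
`(A - D(x^{k+1})) (x^{k+2} - x^{k+1}) = (D(x^{k+1}) - D(x^k)) x^{k+1} ≥ 0`, since
`sign(t) t = |t|` dominates `s t` for `|s| ≤ 1`. Hence the iterates increase from `k = 1` on,
and with them every sign; each change of a sign is an integer jump of at least one.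
-/

namespace Real

theorem sign_le_one (r : ℝ) : sign r ≤ 1 := by
  rcases sign_apply_eq r with h | h | h <;> rw [h] <;> norm_num

theorem neg_one_le_sign (r : ℝ) : -1 ≤ sign r := by
  rcases sign_apply_eq r with h | h | h <;> rw [h] <;> norm_num

theorem abs_sign_le_one (r : ℝ) : |sign r| ≤ 1 :=
  abs_le.2 ⟨neg_one_le_sign r, sign_le_one r⟩

theorem sign_mono : Monotone sign := by
  intro a b hab
  rcases lt_trichotomy a 0 with ha | rfl | ha
  · rw [sign_of_neg ha]
    exact neg_one_le_sign b
  · rcases hab.eq_or_lt with rfl | hb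
    · rfl
    · rw [sign_zero, sign_of_pos hb]
      norm_num
  · rw [sign_of_pos ha, sign_of_pos (ha.trans_le hab)]

theorem sign_add_one_le_of_le_of_ne {a b : ℝ} (hab : a ≤ b) (hne : sign a ≠ sign b) :
    sign a + 1 ≤ sign b := by
  have hmono := sign_mono hab
  rcases sign_apply_eq a with h | h | h <;> rcases sign_apply_eq b with h' | h' | h' <;>
    rw [h, h'] at hmono hne ⊢ <;> norm_num at *

theorem mul_le_sign_mul_self {s : ℝ} (hs : |s| ≤ 1) (r : ℝ) : s * r ≤ sign r * r := by
  obtain ⟨hs₁, hs₂⟩ := abs_le.1 hs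
  rcases lt_trichotomy r 0 with hr | rfl | hr
  · rw [sign_of_neg hr]
    nlinarith
  · simp
  · rw [sign_of_pos hr]
    nlinarith

theorem exists_intCast_eq_sign (r : ℝ) : ∃ z : ℤ, (z : ℝ) = sign r := by
  rcases sign_apply_eq r with h | h | h
  exacts [⟨-1, by simp [h]⟩, ⟨0, by simp [h]⟩, ⟨1, by simp [h]⟩]

end Real

section SignSum

variable {ι : Type*} [Fintype ι]

theorem exists_sum_sign_eq_intCast (f : ι → ℝ) : ∃ m : ℤ, ∑ i, Real.sign (f i) = m := by
  choose z hz using fun i => Real.exists_intCast_eq_sign (f i)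
  exact ⟨∑ i, z i, by simp [hz]⟩

theorem abs_sum_sign_le_card (f : ι → ℝ) : |∑ i, Real.sign (f i)| ≤ Fintype.card ι :=
  calc |∑ i, Real.sign (f i)| ≤ ∑ i, |Real.sign (f i)| := Finset.abs_sum_le_sum_abs _ _
    _ ≤ ∑ _i : ι, (1 : ℝ) := Finset.sum_le_sum fun i _ => Real.abs_sign_le_one _
    _ = Fintype.card ι := by simp

theorem sum_sign_le_sum_sign {f g : ι → ℝ} (hfg : f ≤ g) :
    ∑ i, Real.sign (f i) ≤ ∑ i, Real.sign (g i) :=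
  Finset.sum_le_sum fun i _ => Real.sign_mono (hfg i)

theorem sum_sign_add_one_le {f g : ι → ℝ} (hfg : f ≤ g) {i : ι}
    (hi : Real.sign (f i) ≠ Real.sign (g i)) :
    ∑ j, Real.sign (f j) + 1 ≤ ∑ j, Real.sign (g j) := by
  have hgap := Real.sign_add_one_le_of_le_of_ne (hfg i) hi
  have hsingle : Real.sign (g i) - Real.sign (f i) ≤
      ∑ j, (Real.sign (g j) - Real.sign (f j)) :=
    Finset.single_le_sum (fun j _ => sub_nonneg.2 (Real.sign_mono (hfg j))) (Finset.mem_univ i)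
  rw [Finset.sum_sub_distrib] at hsingle
  linarith

end SignSum

section SignD

variable {n : ℕ}

theorem exists_sign_ne_of_signD_ne {x y : Fin n → ℝ} (h : signD x ≠ signD y) :
    ∃ i, Real.sign (x i) ≠ Real.sign (y i) := by
  by_contra! hxy
  exact h (congrArg diagonal (funext hxy))

theorem signD_mulVec_le_signD_mulVec_self (w y : Fin n → ℝ) :
    signD w *ᵥ y ≤ signD y *ᵥ y := fun i => by
  simp only [signD, mulVec_diagonal]
  exact Real.mul_le_sign_mul_self (Real.abs_sign_le_one _) _

end SignD

section MMatrix

variable {n : ℕ}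

/-- If `y` had a negative entry, then at an index `j` minimising `y j / v j` the entry `(Z y) j`
would be negative. -/
theorem IsZMatrix.nonneg_of_nonneg_mulVec {Z : Matrix (Fin n) (Fin n) ℝ} (hZ : IsZMatrix Z)
    {v : Fin n → ℝ} (hv : ∀ i, 0 < v i) (hZv : ∀ i, 0 < (Z *ᵥ v) i)
    {y : Fin n → ℝ} (hy : 0 ≤ Z *ᵥ y) : 0 ≤ y := by
  by_contra hneg
  obtain ⟨i₀, hi₀⟩ : ∃ i, y i < 0 := by simpa [Pi.le_def] using hneg
  obtain ⟨j, -, hj⟩ := Finset.exists_min_image Finset.univ (fun i => y i / v i)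
    ⟨i₀, Finset.mem_univ i₀⟩
  set t := y j / v j
  have ht : t < 0 := (hj i₀ (Finset.mem_univ i₀)).trans_lt (div_neg_of_neg_of_pos hi₀ (hv i₀))
  have hyj : y j = t * v j := (div_mul_cancel₀ _ (hv j).ne').symm
  have hterm : ∀ i ∈ Finset.univ, Z j i * y i ≤ Z j i * (t * v i) := by
    intro i _
    rcases eq_or_ne i j with rfl | hij
    · rw [← hyj]
    · exact mul_le_mul_of_nonpos_left ((le_div_iff₀ (hv i)).1 (hj i (Finset.mem_univ i)))
        (hZ j i hij.symm)
  have hZyj : (Z *ᵥ y) j ≤ t * (Z *ᵥ v) j :=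
    calc (Z *ᵥ y) j = ∑ i, Z j i * y i := rfl
      _ ≤ ∑ i, Z j i * (t * v i) := Finset.sum_le_sum hterm
      _ = t * (Z *ᵥ v) j := by
        simp only [mulVec, dotProduct, Finset.mul_sum]
        exact Finset.sum_congr rfl fun i _ => by ring
  exact (hy j).not_gt (hZyj.trans_lt (mul_neg_of_neg_of_pos ht (hZv j)))

theorem IsZMatrix.isUnit_of_mulVec_pos {Z : Matrix (Fin n) (Fin n) ℝ} (hZ : IsZMatrix Z)
    {v : Fin n → ℝ} (hv : ∀ i, 0 < v i) (hZv : ∀ i, 0 < (Z *ᵥ v) i) : IsUnit Z := by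
  rw [← mulVec_injective_iff_isUnit]
  intro y₁ y₂ hy
  have hle : ∀ y y' : Fin n → ℝ, Z *ᵥ y = Z *ᵥ y' → y' ≤ y := fun y y' h =>
    sub_nonneg.1 (hZ.nonneg_of_nonneg_mulVec hv hZv (by rw [mulVec_sub, h, sub_self]))
  exact le_antisymm (hle _ _ hy.symm) (hle _ _ hy)

theorem IsMMatrix.nonneg_of_nonneg_mulVec {M : Matrix (Fin n) (Fin n) ℝ} (hM : IsMMatrix M)
    {y : Fin n → ℝ} (hy : 0 ≤ M *ᵥ y) : 0 ≤ y := by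
  have hdet : IsUnit M.det := (isUnit_iff_isUnit_det M).1 hM.2.1
  have hy_eq : y = M⁻¹ *ᵥ (M *ᵥ y) := by rw [mulVec_mulVec, nonsing_inv_mul M hdet, one_mulVec]
  rw [hy_eq]
  intro i
  simp only [mulVec, dotProduct, Pi.zero_apply]
  exact Finset.sum_nonneg fun j _ => mul_nonneg (hM.2.2 i j) (hy j)

theorem IsMMatrix.inv_mulVec_one_pos {M : Matrix (Fin n) (Fin n) ℝ} (hM : IsMMatrix M)
    (i : Fin n) : 0 < (M⁻¹ *ᵥ 1) i := by
  have hdet : IsUnit M.det := (isUnit_iff_isUnit_det M).1 hM.2.1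
  have hrow : (M⁻¹ *ᵥ 1) i = ∑ j, M⁻¹ i j := by simp [mulVec, dotProduct]
  rw [hrow]
  refine (Finset.sum_nonneg fun j _ => hM.2.2 i j).lt_of_ne fun hzero => ?_
  -- a zero row of `M⁻¹` would make the `(i, i)` entry of `M⁻¹ * M = 1` vanish
  have hrow_zero := (Finset.sum_eq_zero_iff_of_nonneg fun j _ => hM.2.2 i j).1 hzero.symm
  have hii := congrFun (congrFun (nonsing_inv_mul M hdet) i) i
  simp [mul_apply, hrow_zero] at hii

theorem IsMMatrix.add_diagonal {M : Matrix (Fin n) (Fin n) ℝ} (hM : IsMMatrix M)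
    {d : Fin n → ℝ} (hd : 0 ≤ d) : IsMMatrix (M + diagonal d) := by
  have hdet : IsUnit M.det := (isUnit_iff_isUnit_det M).1 hM.2.1
  set v := M⁻¹ *ᵥ 1
  have hv : ∀ i, 0 < v i := hM.inv_mulVec_one_pos
  have hZ : IsZMatrix (M + diagonal d) := fun i j hij => by
    simpa [diagonal_apply_ne _ hij] using hM.1 i j hij
  have hZv : ∀ i, 0 < ((M + diagonal d) *ᵥ v) i := fun i => by
    rw [add_mulVec, mulVec_mulVec, mul_nonsing_inv M hdet, one_mulVec, Pi.add_apply, mulVec_diagonal]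
    simpa using add_pos_of_pos_of_nonneg one_pos (mul_nonneg (hd i) (hv i).le)
  have hunit := hZ.isUnit_of_mulVec_pos hv hZv
  refine ⟨hZ, hunit, fun i j => ?_⟩
  have hcol : 0 ≤ (M + diagonal d)⁻¹ *ᵥ Pi.single j 1 := by
    refine hZ.nonneg_of_nonneg_mulVec hv hZv ?_
    rw [mulVec_mulVec, mul_nonsing_inv _ ((isUnit_iff_isUnit_det _).1 hunit), one_mulVec]
    exact Pi.single_nonneg.2 zero_le_one
  simpa [mulVec_single_one] using hcol i

theorem IsMMatrix.sub_signD {A : Matrix (Fin n) (Fin n) ℝ} (hA : IsMMatrix (A - 1))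
    (w : Fin n → ℝ) : IsMMatrix (A - signD w) := by
  have hsplit : A - signD w = (A - 1) + diagonal (fun i => 1 - Real.sign (w i)) := by
    have hdiag : 1 - signD w = diagonal (fun i => 1 - Real.sign (w i)) := by
      rw [signD, ← diagonal_one, diagonal_sub]
    rw [← hdiag]
    abel
  rw [hsplit]
  exact hA.add_diagonal fun i => sub_nonneg.2 (Real.sign_le_one _)

end MMatrix

theorem generalizedNewton_iterate_le_succ {n : ℕ} {A : Matrix (Fin n) (Fin n) ℝ}
    (hA : IsMMatrix (A - 1)) {b : Fin n → ℝ} {x : ℕ → Fin n → ℝ}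
    (hiter : ∀ k, x (k + 1) = (A - signD (x k))⁻¹ *ᵥ b) (k : ℕ) : x (k + 1) ≤ x (k + 2) := by
  have hsolve : ∀ k, (A - signD (x k)) *ᵥ x (k + 1) = b := fun k => by
    rw [hiter k, mulVec_mulVec, mul_nonsing_inv _
      ((isUnit_iff_isUnit_det _).1 (hA.sub_signD (x k)).2.1), one_mulVec]
  refine sub_nonneg.1 ((hA.sub_signD (x (k + 1))).nonneg_of_nonneg_mulVec ?_)
  have hstep : (A - signD (x (k + 1))) *ᵥ (x (k + 2) - x (k + 1)) =
      signD (x (k + 1)) *ᵥ x (k + 1) - signD (x k) *ᵥ x (k + 1) := by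
    rw [mulVec_sub, hsolve (k + 1), ← hsolve k, sub_mulVec, sub_mulVec]
    abel
  rw [hstep]
  exact sub_nonneg.2 (signD_mulVec_le_signD_mulVec_self _ _)

theorem stmt_19 {n : ℕ} (A : Matrix (Fin n) (Fin n) ℝ)
    (h : IsMMatrix (A - 1)) (b : Fin n → ℝ) (x : ℕ → Fin n → ℝ)
    (hiter : ∀ k, x (k + 1) = (A - signD (x k))⁻¹.mulVec b) :
    (∀ k, 1 ≤ k → ∃ m : ℤ, (∑ i, Real.sign (x k i)) = (m : ℝ)) ∧
    (∀ k, 1 ≤ k → (∑ i, Real.sign (x k i)) ≤ ∑ i, Real.sign (x (k + 1) i)) ∧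
    (∀ k, 1 ≤ k → signD (x (k + 1)) ≠ signD (x k) →
      (∑ i, Real.sign (x k i)) + 1 ≤ ∑ i, Real.sign (x (k + 1) i)) ∧
    (∀ k, 1 ≤ k → -(n : ℝ) ≤ (∑ i, Real.sign (x k i)) ∧
      (∑ i, Real.sign (x k i)) ≤ (n : ℝ)) := by
  have hmono : ∀ k, 1 ≤ k → x k ≤ x (k + 1) := fun k hk => by
    obtain ⟨m, rfl⟩ := Nat.exists_eq_add_of_le' hk
    exact generalizedNewton_iterate_le_succ h hiter m
  refine ⟨fun k _ => exists_sum_sign_eq_intCast _, fun k hk => sum_sign_le_sum_sign (hmono k hk),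
    fun k hk hne => ?_, fun k _ => ?_⟩
  · obtain ⟨i, hi⟩ := exists_sign_ne_of_signD_ne hne
    exact sum_sign_add_one_le (hmono k hk) (Ne.symm hi)
  · simpa [abs_le] using abs_sum_sign_le_card (x k)
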